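/- arXiv:2009.12342 — 8 statements merged into one kernel-verified Lean document; each statement's English description precedes it below -/
import Mathlib

section
/- Let (V, ω) be a complex symplectic vector space with a direct-sum decomposition V = V^P ⊕ V^P̄ into two Lagrangian subspaces; write ξ = ξ^P + ξ^P̄. For ξ₁, ξ₂ ∈ V set D_i(φ) := 2ω(ξ_i, φ). Then −(i/2)·(D₁(−ξ₂^P) + D₂(ξ₁^P̄)) = 2i·ω(ξ₁^P̄, ξ₂^P). (This evaluates the time-ordered two-point vacuum correlation function ρ^{D₁D₂}(W^P) = 2iω(ξ₁^P̄, ξ₂^P), where −ξ₂^P and ξ₁^P̄ are the inhomogeneous solutions satisfying the vacuum boundary conditions on the two sides of the separating hypersurface.) -/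
/-! Splitting `ξ₁ = ξ₁^P + ξ₁^P̄` and `ξ₂ = ξ₂^P + ξ₂^P̄`, isotropy of `V^P` and `V^P̄` kills the
`ω(ξ₁^P, ξ₂^P)` and `ω(ξ₂^P̄, ξ₁^P̄)` terms, and antisymmetry turns the two surviving terms into
the same multiple of `ω(ξ₁^P̄, ξ₂^P)`. -/

theorem LinearMap.apply_add_left_eq_of_isotropic {R M : Type*} [CommSemiring R]
    [AddCommMonoid M] [Module R M] (ω : M →ₗ[R] M →ₗ[R] R) {W : Submodule R M}
    (hW : ∀ x ∈ W, ∀ y ∈ W, ω x y = 0) {a c : M} (ha : a ∈ W) (hc : c ∈ W) (b : M) :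
    ω (a + b) c = ω b c := by
  rw [map_add, LinearMap.add_apply, hW a ha c hc, zero_add]

theorem stmt_4_general (V : Type*) [AddCommGroup V] [Module ℂ V]
    (ω : V →ₗ[ℂ] V →ₗ[ℂ] ℂ)
    (hanti : ∀ x y : V, ω x y = - ω y x)
    (P Pb : Submodule ℂ V)
    (hPiso : ∀ x ∈ P, ∀ y ∈ P, ω x y = 0)
    (hPbiso : ∀ x ∈ Pb, ∀ y ∈ Pb, ω x y = 0)
    (p q : V →ₗ[ℂ] V)
    (hp : ∀ x : V, p x ∈ P) (hq : ∀ x : V, q x ∈ Pb)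
    (hpq : ∀ x : V, p x + q x = x) :
    ∀ ξ₁ ξ₂ : V,
      -(Complex.I / 2) * (2 * ω ξ₁ (-(p ξ₂)) + 2 * ω ξ₂ (q ξ₁)) =
        2 * Complex.I * ω (q ξ₁) (p ξ₂) := by
  intro ξ₁ ξ₂
  have past : ω ξ₁ (p ξ₂) = ω (q ξ₁) (p ξ₂) := by
    simpa only [hpq] using ω.apply_add_left_eq_of_isotropic hPiso (hp ξ₁) (hp ξ₂) (q ξ₁)
  have future : ω ξ₂ (q ξ₁) = -ω (q ξ₁) (p ξ₂) := by
    rw [← hanti]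
    simpa only [add_comm (q ξ₂), hpq] using
      ω.apply_add_left_eq_of_isotropic hPbiso (hq ξ₂) (hq ξ₁) (p ξ₂)
  rw [map_neg, past, future]
  ring

/-- Evaluation of the time-ordered two-point vacuum correlation function
ρ^{D₁D₂}(W^P) = −(i/2)(D₁(−ξ₂^P) + D₂(ξ₁^P̄)) = 2iω(ξ₁^P̄, ξ₂^P). -/
theorem stmt_4 (V : Type*) [AddCommGroup V] [Module ℂ V]
    (ω : V →ₗ[ℂ] V →ₗ[ℂ] ℂ)
    (hanti : ∀ x y : V, ω x y = - ω y x)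
    (hnondeg : ∀ x : V, (∀ y : V, ω x y = 0) → x = 0)
    (P Pb : Submodule ℂ V)
    (hPiso : ∀ x ∈ P, ∀ y ∈ P, ω x y = 0)
    (hPcoiso : ∀ y : V, (∀ x ∈ P, ω x y = 0) → y ∈ P)
    (hPbiso : ∀ x ∈ Pb, ∀ y ∈ Pb, ω x y = 0)
    (hPbcoiso : ∀ y : V, (∀ x ∈ Pb, ω x y = 0) → y ∈ Pb)
    (p q : V →ₗ[ℂ] V)
    (hp : ∀ x : V, p x ∈ P) (hq : ∀ x : V, q x ∈ Pb)
    (hpq : ∀ x : V, p x + q x = x)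
    (hdisj : P ⊓ Pb = ⊥) :
    ∀ ξ₁ ξ₂ : V,
      -(Complex.I / 2) * (2 * ω ξ₁ (-(p ξ₂)) + 2 * ω ξ₂ (q ξ₁)) =
        2 * Complex.I * ω (q ξ₁) (p ξ₂) :=
  stmt_4_general V ω hanti P Pb hPiso hPbiso p q hp hq hpq
end

section
/- Let (V, ω) be a complex symplectic vector space with a direct-sum decomposition V = L_int ⊕ L^P into two Lagrangian subspaces; write ξ = ξ^int + ξ^ext with ξ^int ∈ L_int and ξ^ext ∈ L^P. Let η ∈ L^P and let D : V → ℂ be a complex-linear functional satisfying D(δ) = 2ω(δ, η) for all δ ∈ L_int. Then for every ξ ∈ V: exp((i/2)·D(η + ξ^int) + i·ω(ξ, η + ξ^int − (1/2)ξ)) = exp(i·ω(ξ, ξ^int)) · exp(i·D(ξ^int)) · exp((i/2)·D(η)). (This is the factorization ρ_M^F(K^P_ξ) = ρ_M(K^P_ξ) · F(ξ^int) · ρ_M^F(W^P) of the correlation function of the Weyl observable F = exp(iD) with the coherent boundary observable determined by ξ, for a general polarization L^P transversal to the space L_int of interior solutions.) -/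
/-! Split ξ = ξ^int + ξ^ext. Since L^P is isotropic and η, ξ^ext ∈ L^P, ω(ξ, η) = ω(ξ^int, η),
which by the hypothesis on D is D(ξ^int)/2; together with ω(ξ, ξ) = 0 this turns the exponent on
the left into the sum of the three exponents on the right. -/

theorem exponent_eq_of_apply_eq {V : Type*} [AddCommGroup V] [Module ℂ V]
    (ω : V →ₗ[ℂ] V →ₗ[ℂ] ℂ) (D : V →ₗ[ℂ] ℂ) (c : ℂ) {ξ δ η : V}
    (hξξ : ω ξ ξ = 0) (hξη : ω ξ η = ω δ η) (hDδ : D δ = 2 * ω δ η) :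
    c / 2 * D (η + δ) + c * ω ξ (η + δ - (2:ℂ)⁻¹ • ξ) =
      c * ω ξ δ + c * D δ + c / 2 * D η := by
  simp only [map_add, map_sub, map_smul, smul_eq_mul]
  linear_combination c * hξη - c / 2 * hDδ - c / 2 * hξξ

theorem stmt_6_general (V : Type*) [AddCommGroup V] [Module ℂ V]
    (ω : V →ₗ[ℂ] V →ₗ[ℂ] ℂ)
    (hanti : ∀ x y : V, ω x y = - ω y x)
    (Lint LP : Submodule ℂ V)
    (hPiso : ∀ x ∈ LP, ∀ y ∈ LP, ω x y = 0)
    -- V = L_int ⊕ L^P with projections ξ ↦ ξ^int, ξ ↦ ξ^ext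
    (pint pext : V →ₗ[ℂ] V)
    (hpint : ∀ x : V, pint x ∈ Lint) (hpext : ∀ x : V, pext x ∈ LP)
    (hsum : ∀ x : V, pint x + pext x = x)
    -- η ∈ L^P and the linear observable D with D(δ) = 2ω(δ, η) for interior solutions δ
    (η : V) (hη : η ∈ LP)
    (D : V →ₗ[ℂ] ℂ)
    (hD : ∀ δ ∈ Lint, D δ = 2 * ω δ η) :
    ∀ ξ : V,
      Complex.exp ((Complex.I / 2) * D (η + pint ξ) +
          Complex.I * ω ξ (η + pint ξ - (2:ℂ)⁻¹ • ξ)) =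
        Complex.exp (Complex.I * ω ξ (pint ξ)) *
          Complex.exp (Complex.I * D (pint ξ)) *
          Complex.exp ((Complex.I / 2) * D η) := by
  intro ξ
  have hω : ω.IsAlt := LinearMap.isAlt_iff_eq_neg_flip.mpr <| by ext x y; exact hanti x y
  have hξη : ω ξ η = ω (pint ξ) η := calc
    ω ξ η = ω (pint ξ + pext ξ) η := by rw [hsum]
    _ = ω (pint ξ) η := by
      rw [map_add, LinearMap.add_apply, hPiso _ (hpext ξ) _ hη, add_zero]
  rw [exponent_eq_of_apply_eq ω D Complex.I (hω.self_eq_zero ξ) hξη (hD _ (hpint ξ)),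
    Complex.exp_add, Complex.exp_add]

/-- The factorization ρ_M^F(K^P_ξ) = ρ_M(K^P_ξ)·F(ξ^int)·ρ_M^F(W^P) of the
correlation function of a Weyl observable with a coherent boundary observable, for a general
polarization L^P transversal to the space L_int of interior solutions. -/
theorem stmt_6 (V : Type*) [AddCommGroup V] [Module ℂ V]
    (ω : V →ₗ[ℂ] V →ₗ[ℂ] ℂ)
    (hanti : ∀ x y : V, ω x y = - ω y x)
    (hnondeg : ∀ x : V, (∀ y : V, ω x y = 0) → x = 0)
    (Lint LP : Submodule ℂ V)
    (hintiso : ∀ x ∈ Lint, ∀ y ∈ Lint, ω x y = 0)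
    (hintcoiso : ∀ y : V, (∀ x ∈ Lint, ω x y = 0) → y ∈ Lint)
    (hPiso : ∀ x ∈ LP, ∀ y ∈ LP, ω x y = 0)
    (hPcoiso : ∀ y : V, (∀ x ∈ LP, ω x y = 0) → y ∈ LP)
    -- V = L_int ⊕ L^P with projections ξ ↦ ξ^int, ξ ↦ ξ^ext
    (pint pext : V →ₗ[ℂ] V)
    (hpint : ∀ x : V, pint x ∈ Lint) (hpext : ∀ x : V, pext x ∈ LP)
    (hsum : ∀ x : V, pint x + pext x = x)
    (hdisj : Lint ⊓ LP = ⊥)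
    -- η ∈ L^P and the linear observable D with D(δ) = 2ω(δ, η) for interior solutions δ
    (η : V) (hη : η ∈ LP)
    (D : V →ₗ[ℂ] ℂ)
    (hD : ∀ δ ∈ Lint, D δ = 2 * ω δ η) :
    ∀ ξ : V,
      Complex.exp ((Complex.I / 2) * D (η + pint ξ) +
          Complex.I * ω ξ (η + pint ξ - (2:ℂ)⁻¹ • ξ)) =
        Complex.exp (Complex.I * ω ξ (pint ξ)) *
          Complex.exp (Complex.I * D (pint ξ)) *
          Complex.exp ((Complex.I / 2) * D η) :=
  stmt_6_general V ω hanti Lint LP hPiso pint pext hpint hpext hsum η hη D hD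
end

section
/- Let (V, ω) be a complex symplectic vector space with a direct-sum decomposition V = L_int ⊕ L^P into two Lagrangian subspaces; write ξ = ξ^int + ξ^ext with ξ^int ∈ L_int and ξ^ext ∈ L^P. Let η ∈ L^P and let D : V → ℂ be a complex-linear functional satisfying D(δ) = 2ω(δ, η) for all δ ∈ L_int. Then for every ξ ∈ η + L_int and every τ ∈ V: (1/2)·D(η) + D((ξ+τ)^int) + ω(ξ+τ, (ξ+τ)^int) = ω(τ, τ^int) + (1/2)·D(ξ) + ω(τ, ξ). (Exponentiated with the factor i, this is the identity ρ_M^F(K^P_{ξ+τ}) = ρ_M(K^P_τ) · exp((i/2)D(ξ) + iω(τ, ξ)) for the Weyl observable F = exp(iD) and any solution ξ of the D-modified equations of motion.) -/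
/-!
Write `δ := ξ - η ∈ L_int`. Splitting `ξ + τ = (δ + τ^int) + (η + τ^ext)` along `L_int ⊕ L^P`
gives `(ξ + τ)^int = δ + τ^int`. Expanding both sides bilinearly, the terms that survive are
killed by the isotropy of `L_int` (`ω(δ, δ) = ω(δ, τ^int) = 0`) and of `L^P` (`ω(τ^ext, η) = 0`),
antisymmetry of `ω`, and `D = 2ω(·, η)` on `δ` and `τ^int`.
-/

namespace Submodule

variable {R M : Type*} [Ring R] [AddCommGroup M] [Module R M]

theorem eq_of_add_eq_add_of_inf_eq_bot {L P : Submodule R M} (hLP : L ⊓ P = ⊥)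
    {a a' b b' : M} (ha : a ∈ L) (ha' : a' ∈ L) (hb : b ∈ P) (hb' : b' ∈ P)
    (h : a + b = a' + b') : a = a' := by
  have hL : a - a' ∈ L := sub_mem ha ha'
  have hP : a - a' ∈ P := by
    rw [show a - a' = b' - b by linear_combination (norm := module) h]
    exact sub_mem hb' hb
  have : a - a' ∈ L ⊓ P := ⟨hL, hP⟩
  rwa [hLP, mem_bot, sub_eq_zero] at this

theorem apply_add_of_inf_eq_bot {L P : Submodule R M} (hLP : L ⊓ P = ⊥) {p q : M → M}
    (hp : ∀ x, p x ∈ L) (hq : ∀ x, q x ∈ P) (hpq : ∀ x, p x + q x = x)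
    {a b : M} (ha : a ∈ L) (hb : b ∈ P) : p (a + b) = a :=
  eq_of_add_eq_add_of_inf_eq_bot hLP (hp _) ha (hq _) hb (hpq _)

end Submodule

theorem stmt_7_general (V : Type*) [AddCommGroup V] [Module ℂ V]
    (ω : V →ₗ[ℂ] V →ₗ[ℂ] ℂ)
    (hanti : ∀ x y : V, ω x y = - ω y x)
    (Lint LP : Submodule ℂ V)
    (hintiso : ∀ x ∈ Lint, ∀ y ∈ Lint, ω x y = 0)
    (hPiso : ∀ x ∈ LP, ∀ y ∈ LP, ω x y = 0)
    -- V = L_int ⊕ L^P with projections ξ ↦ ξ^int, ξ ↦ ξ^ext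
    (pint pext : V →ₗ[ℂ] V)
    (hpint : ∀ x : V, pint x ∈ Lint) (hpext : ∀ x : V, pext x ∈ LP)
    (hsum : ∀ x : V, pint x + pext x = x)
    (hdisj : Lint ⊓ LP = ⊥)
    -- η ∈ L^P and the linear observable D with D(δ) = 2ω(δ, η) for interior solutions δ
    (η : V) (hη : η ∈ LP)
    (D : V →ₗ[ℂ] ℂ)
    (hD : ∀ δ ∈ Lint, D δ = 2 * ω δ η) :
    ∀ ξ : V, ξ - η ∈ Lint → ∀ τ : V,
      (2:ℂ)⁻¹ * D η + D (pint (ξ + τ)) + ω (ξ + τ) (pint (ξ + τ)) =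
        ω τ (pint τ) + (2:ℂ)⁻¹ * D ξ + ω τ ξ := by
  intro ξ hδ τ
  set δ := ξ - η
  have hξ : ξ = η + δ := by simp [δ]
  have hτ : τ = pint τ + pext τ := (hsum τ).symm
  have hproj : pint (ξ + τ) = δ + pint τ := by
    rw [show ξ + τ = (δ + pint τ) + (η + pext τ) by rw [hξ]; nth_rw 1 [hτ]; abel]
    exact Submodule.apply_add_of_inf_eq_bot hdisj hpint hpext hsum
      (add_mem hδ (hpint τ)) (add_mem hη (hpext τ))
  have hDδ := hD δ hδ
  have hDτ := hD (pint τ) (hpint τ)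
  have hδδ := hintiso δ hδ δ hδ
  have hδτ := hintiso δ hδ (pint τ) (hpint τ)
  have hτη := hPiso (pext τ) (hpext τ) η hη
  have hωτη : ω τ η = ω (pint τ) η + ω (pext τ) η := by
    rw [← LinearMap.add_apply, ← map_add, hsum]
  rw [hproj, hξ]
  simp only [map_add, LinearMap.add_apply]
  linear_combination (2:ℂ)⁻¹ * hDδ + hDτ + hδδ + hδτ - hτη + hanti η δ + hanti η (pint τ) - hωτη

/-- The identity underlying ρ_M^F(K^P_{ξ+τ}) = ρ_M(K^P_τ)·exp((i/2)D(ξ)+iω(τ,ξ))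
for a Weyl observable F = exp(iD) and a solution ξ of the D-modified equations of motion. -/
theorem stmt_7 (V : Type*) [AddCommGroup V] [Module ℂ V]
    (ω : V →ₗ[ℂ] V →ₗ[ℂ] ℂ)
    (hanti : ∀ x y : V, ω x y = - ω y x)
    (hnondeg : ∀ x : V, (∀ y : V, ω x y = 0) → x = 0)
    (Lint LP : Submodule ℂ V)
    (hintiso : ∀ x ∈ Lint, ∀ y ∈ Lint, ω x y = 0)
    (hintcoiso : ∀ y : V, (∀ x ∈ Lint, ω x y = 0) → y ∈ Lint)
    (hPiso : ∀ x ∈ LP, ∀ y ∈ LP, ω x y = 0)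
    (hPcoiso : ∀ y : V, (∀ x ∈ LP, ω x y = 0) → y ∈ LP)
    -- V = L_int ⊕ L^P with projections ξ ↦ ξ^int, ξ ↦ ξ^ext
    (pint pext : V →ₗ[ℂ] V)
    (hpint : ∀ x : V, pint x ∈ Lint) (hpext : ∀ x : V, pext x ∈ LP)
    (hsum : ∀ x : V, pint x + pext x = x)
    (hdisj : Lint ⊓ LP = ⊥)
    -- η ∈ L^P and the linear observable D with D(δ) = 2ω(δ, η) for interior solutions δ
    (η : V) (hη : η ∈ LP)
    (D : V →ₗ[ℂ] ℂ)
    (hD : ∀ δ ∈ Lint, D δ = 2 * ω δ η) :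
    ∀ ξ : V, ξ - η ∈ Lint → ∀ τ : V,
      (2:ℂ)⁻¹ * D η + D (pint (ξ + τ)) + ω (ξ + τ) (pint (ξ + τ)) =
        ω τ (pint τ) + (2:ℂ)⁻¹ * D ξ + ω τ ξ :=
  stmt_7_general V ω hanti Lint LP hintiso hPiso pint pext hpint hpext hsum hdisj η hη D hD
end

section
/- Let (V₁, ω₁) and (W, ω_W) be complex symplectic vector spaces and let V := V₁ ⊕ W ⊕ W carry the symplectic form ω((a,b,c),(a′,b′,c′)) := ω₁(a,a′) + ω_W(b,b′) − ω_W(c,c′). Let L_int ⊆ V be a Lagrangian subspace, let L₁ ⊆ V₁ be a Lagrangian subspace of (V₁, ω₁), let L_Σ be a subspace of {0} ⊕ W ⊕ W, and let Δ := {(0,w,w) : w ∈ W}. Assume that L^P := L₁ ⊕ L_Σ and L^{P₁,m} := L₁ ⊕ Δ are Lagrangian subspaces of (V, ω), that V = L_int ⊕ L^P, and that V = L_int ⊕ L^{P₁,m}. For x ∈ V write x = x^{int} + x^{ext} with x^{int} ∈ L_int, x^{ext} ∈ L^P, and x = x^{int′} + x^{ext′} with x^{int′} ∈ L_int, x^{ext′}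 ∈ L^{P₁,m}. Let π(a,b,c) := (0,b,c) and define Q : V → ℂ by Q(φ) := ω(π(φ)^{ext′}, π(φ)^{ext}). Then: (1) Q(φ + (δ,0,0)) = Q(φ) for all φ ∈ V and all δ ∈ V₁; (2) Q(φ + ((0,δ,δ′))^{int}) = Q(φ) for all φ ∈ V and all δ, δ′ ∈ W. (These are the two invariance properties of the slice observable G′(φ) = exp(iQ(φ)) that effects the composition of amplitudes along the gluing hypersurface.) -/
/-!
Translating φ by a vector of V₁ does not change π(φ), hence not Q(φ). For ψ = (0,δ,δ′),
the V₁-component of ψ^{int} is −a with a the V₁-component of ψ^{ext}, which lies in L₁;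
so π(ψ^{int}) = ψ^{int} + w with w = (a,0,0) ∈ L^P ∩ L^{P₁,m}. Both exterior projections
kill ψ^{int} and fix w, so translating φ by ψ^{int} shifts both arguments of Q by w, and
this does not change the pairing because L^P and L^{P₁,m} are isotropic and both contain w.
-/

theorem Submodule.apply_add_eq_of_disjoint {R M : Type*} [Ring R] [AddCommGroup M]
    [Module R M] {A B : Submodule R M} (hAB : Disjoint A B)
    {p q : M → M} (hp : ∀ x, p x ∈ A) (hq : ∀ x, q x ∈ B) (hpq : ∀ x, p x + q x = x)
    {a b : M} (ha : a ∈ A) (hb : b ∈ B) : q (a + b) = b := by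
  have hdiff : q (a + b) - b = a - p (a + b) := by
    rw [sub_eq_sub_iff_add_eq_add]
    exact (add_comm _ _).trans (hpq _)
  have hA : q (a + b) - b ∈ A := hdiff ▸ A.sub_mem ha (hp _)
  have hB : q (a + b) - b ∈ B := B.sub_mem (hq _) hb
  exact sub_eq_zero.mp ((Submodule.disjoint_def.mp hAB) _ hA hB)

theorem LinearMap.apply_add_add_eq_of_isotropic {R M : Type*} [CommRing R] [AddCommGroup M]
    [Module R M] (B : M →ₗ[R] M →ₗ[R] R) {L L' : Submodule R M}
    (hL : ∀ x ∈ L, ∀ y ∈ L, B x y = 0) (hL' : ∀ x ∈ L', ∀ y ∈ L', B x y = 0)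
    {x y w : M} (hx : x ∈ L') (hy : y ∈ L) (hwL : w ∈ L) (hwL' : w ∈ L') :
    B (x + w) (y + w) = B x y := by
  simp only [map_add, LinearMap.add_apply, hL' x hx w hwL', hL w hwL y hy, hL w hwL w hwL,
    add_zero]

theorem stmt_9_general (V₁ W : Type*) [AddCommGroup V₁] [Module ℂ V₁]
    [AddCommGroup W] [Module ℂ W]
    -- the symplectic form on V = V₁ × W × W
    (Ω : (V₁ × W × W) →ₗ[ℂ] (V₁ × W × W) →ₗ[ℂ] ℂ)
    (Lint : Submodule ℂ (V₁ × W × W))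
    (L₁ : Submodule ℂ V₁)
    -- L_Σ a subspace of {0} ⊕ W ⊕ W
    (LSig : Submodule ℂ (V₁ × W × W))
    (hLSig : ∀ x ∈ LSig, x.1 = (0 : V₁))
    -- L^P = L₁ ⊕ L_Σ and L^{P₁,m} = L₁ ⊕ Δ, where Δ = {(0,w,w)}
    (LP LP1m : Submodule ℂ (V₁ × W × W))
    (hLP : ∀ x : V₁ × W × W, x ∈ LP ↔
      ∃ a ∈ L₁, ∃ s ∈ LSig, x = ((a, (0:W), (0:W)) : V₁ × W × W) + s)
    (hLP1m : ∀ x : V₁ × W × W, x ∈ LP1m ↔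
      ∃ a ∈ L₁, ∃ w : W, x = ((a, (0:W), (0:W)) : V₁ × W × W) + ((0:V₁), w, w))
    -- L^P and L^{P₁,m} Lagrangian in (V, Ω)
    (hLPiso : ∀ x ∈ LP, ∀ y ∈ LP, Ω x y = 0)
    (hLP1miso : ∀ x ∈ LP1m, ∀ y ∈ LP1m, Ω x y = 0)
    -- V = L_int ⊕ L^P with projections x ↦ x^int, x ↦ x^ext
    (pint pext : (V₁ × W × W) →ₗ[ℂ] (V₁ × W × W))
    (hpint : ∀ x, pint x ∈ Lint) (hpext : ∀ x, pext x ∈ LP)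
    (hsum : ∀ x : V₁ × W × W, pint x + pext x = x)
    (hdisj : Lint ⊓ LP = ⊥)
    -- V = L_int ⊕ L^{P₁,m} with projections x ↦ x^{int′}, x ↦ x^{ext′}
    (pint' pext' : (V₁ × W × W) →ₗ[ℂ] (V₁ × W × W))
    (hpint' : ∀ x, pint' x ∈ Lint) (hpext' : ∀ x, pext' x ∈ LP1m)
    (hsum' : ∀ x : V₁ × W × W, pint' x + pext' x = x)
    (hdisj' : Lint ⊓ LP1m = ⊥)
    -- π(a,b,c) = (0,b,c) and Q(φ) = Ω(π(φ)^{ext′}, π(φ)^{ext})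
    (π : (V₁ × W × W) →ₗ[ℂ] (V₁ × W × W))
    (hπ : ∀ x : V₁ × W × W, π x = ((0 : V₁), x.2.1, x.2.2))
    (Q : (V₁ × W × W) → ℂ)
    (hQ : ∀ x : V₁ × W × W, Q x = Ω (pext' (π x)) (pext (π x))) :
    -- (1) invariance under translation by elements of V₁
    (∀ (φ : V₁ × W × W) (δ : V₁), Q (φ + ((δ, (0:W), (0:W)) : V₁ × W × W)) = Q φ) ∧
    -- (2) invariance under translation by ((0,δ,δ′))^{int}
    (∀ (φ : V₁ × W × W) (δ δ' : W),
      Q (φ + pint (((0:V₁), δ, δ') : V₁ × W × W)) = Q φ) := by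
  refine ⟨fun φ δ => by simp [hQ, hπ], fun φ δ δ' => ?_⟩
  set ψ : V₁ × W × W := ((0:V₁), δ, δ')
  set a := (pext ψ).1
  set w : V₁ × W × W := (a, 0, 0)
  have ha : a ∈ L₁ := by
    obtain ⟨b, hb, s, hs, hψ⟩ := (hLP _).1 (hpext ψ)
    simpa [a, hψ, hLSig s hs] using hb
  have hwLP : w ∈ LP := (hLP w).2 ⟨a, ha, 0, LSig.zero_mem, (add_zero w).symm⟩
  have hwLP1m : w ∈ LP1m := (hLP1m w).2 ⟨a, ha, 0, by simp [w]⟩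
  have hπint : π (pint ψ) = pint ψ + w := by
    have hfst : (pint ψ).1 + a = 0 := by simpa [ψ] using congrArg Prod.fst (hsum ψ)
    rw [hπ]
    ext <;> simp [w, hfst]
  have hext (x : V₁ × W × W) : pext (x + π (pint ψ)) = pext x + w := by
    rw [hπint, map_add,
      Submodule.apply_add_eq_of_disjoint (disjoint_iff.mpr hdisj) hpint hpext hsum
        (hpint ψ) hwLP]
  have hext' (x : V₁ × W × W) : pext' (x + π (pint ψ)) = pext' x + w := by
    rw [hπint, map_add,
      Submodule.apply_add_eq_of_disjoint (disjoint_iff.mpr hdisj') hpint' hpext' hsum'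
        (hpint ψ) hwLP1m]
  rw [hQ, hQ, map_add, hext, hext']
  exact Ω.apply_add_add_eq_of_isotropic hLPiso hLP1miso (hpext' _) (hpext _) hwLP hwLP1m

/-- The two invariance properties of the slice observable
Q(φ) = ω(π(φ)^{ext′}, π(φ)^{ext}) effecting the composition of amplitudes along the gluing
hypersurface, where V = V₁ ⊕ W ⊕ W with ω((a,b,c),(a′,b′,c′)) = ω₁(a,a′) + ω_W(b,b′) − ω_W(c,c′),
L^P = L₁ ⊕ L_Σ and L^{P₁,m} = L₁ ⊕ Δ. -/
theorem stmt_9 (V₁ W : Type*) [AddCommGroup V₁] [Module ℂ V₁]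
    [AddCommGroup W] [Module ℂ W]
    -- symplectic forms on V₁ and W
    (ω₁ : V₁ →ₗ[ℂ] V₁ →ₗ[ℂ] ℂ)
    (hanti₁ : ∀ x y : V₁, ω₁ x y = - ω₁ y x)
    (hnondeg₁ : ∀ x : V₁, (∀ y : V₁, ω₁ x y = 0) → x = 0)
    (ωW : W →ₗ[ℂ] W →ₗ[ℂ] ℂ)
    (hantiW : ∀ x y : W, ωW x y = - ωW y x)
    (hnondegW : ∀ x : W, (∀ y : W, ωW x y = 0) → x = 0)
    -- the symplectic form on V = V₁ × W × W
    (Ω : (V₁ × W × W) →ₗ[ℂ] (V₁ × W × W) →ₗ[ℂ] ℂ)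
    (hΩ : ∀ x y : V₁ × W × W,
      Ω x y = ω₁ x.1 y.1 + ωW x.2.1 y.2.1 - ωW x.2.2 y.2.2)
    -- L_int Lagrangian in (V, Ω)
    (Lint : Submodule ℂ (V₁ × W × W))
    (hintiso : ∀ x ∈ Lint, ∀ y ∈ Lint, Ω x y = 0)
    (hintcoiso : ∀ y : V₁ × W × W, (∀ x ∈ Lint, Ω x y = 0) → y ∈ Lint)
    -- L₁ Lagrangian in (V₁, ω₁)
    (L₁ : Submodule ℂ V₁)
    (hL₁iso : ∀ x ∈ L₁, ∀ y ∈ L₁, ω₁ x y = 0)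
    (hL₁coiso : ∀ y : V₁, (∀ x ∈ L₁, ω₁ x y = 0) → y ∈ L₁)
    -- L_Σ a subspace of {0} ⊕ W ⊕ W
    (LSig : Submodule ℂ (V₁ × W × W))
    (hLSig : ∀ x ∈ LSig, x.1 = (0 : V₁))
    -- L^P = L₁ ⊕ L_Σ and L^{P₁,m} = L₁ ⊕ Δ, where Δ = {(0,w,w)}
    (LP LP1m : Submodule ℂ (V₁ × W × W))
    (hLP : ∀ x : V₁ × W × W, x ∈ LP ↔
      ∃ a ∈ L₁, ∃ s ∈ LSig, x = ((a, (0:W), (0:W)) : V₁ × W × W) + s)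
    (hLP1m : ∀ x : V₁ × W × W, x ∈ LP1m ↔
      ∃ a ∈ L₁, ∃ w : W, x = ((a, (0:W), (0:W)) : V₁ × W × W) + ((0:V₁), w, w))
    -- L^P and L^{P₁,m} Lagrangian in (V, Ω)
    (hLPiso : ∀ x ∈ LP, ∀ y ∈ LP, Ω x y = 0)
    (hLPcoiso : ∀ y : V₁ × W × W, (∀ x ∈ LP, Ω x y = 0) → y ∈ LP)
    (hLP1miso : ∀ x ∈ LP1m, ∀ y ∈ LP1m, Ω x y = 0)
    (hLP1mcoiso : ∀ y : V₁ × W × W, (∀ x ∈ LP1m, Ω x y = 0) → y ∈ LP1m)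
    -- V = L_int ⊕ L^P with projections x ↦ x^int, x ↦ x^ext
    (pint pext : (V₁ × W × W) →ₗ[ℂ] (V₁ × W × W))
    (hpint : ∀ x, pint x ∈ Lint) (hpext : ∀ x, pext x ∈ LP)
    (hsum : ∀ x : V₁ × W × W, pint x + pext x = x)
    (hdisj : Lint ⊓ LP = ⊥)
    -- V = L_int ⊕ L^{P₁,m} with projections x ↦ x^{int′}, x ↦ x^{ext′}
    (pint' pext' : (V₁ × W × W) →ₗ[ℂ] (V₁ × W × W))
    (hpint' : ∀ x, pint' x ∈ Lint) (hpext' : ∀ x, pext' x ∈ LP1m)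
    (hsum' : ∀ x : V₁ × W × W, pint' x + pext' x = x)
    (hdisj' : Lint ⊓ LP1m = ⊥)
    -- π(a,b,c) = (0,b,c) and Q(φ) = Ω(π(φ)^{ext′}, π(φ)^{ext})
    (π : (V₁ × W × W) →ₗ[ℂ] (V₁ × W × W))
    (hπ : ∀ x : V₁ × W × W, π x = ((0 : V₁), x.2.1, x.2.2))
    (Q : (V₁ × W × W) → ℂ)
    (hQ : ∀ x : V₁ × W × W, Q x = Ω (pext' (π x)) (pext (π x))) :
    -- (1) invariance under translation by elements of V₁
    (∀ (φ : V₁ × W × W) (δ : V₁), Q (φ + ((δ, (0:W), (0:W)) : V₁ × W × W)) = Q φ) ∧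
    -- (2) invariance under translation by ((0,δ,δ′))^{int}
    (∀ (φ : V₁ × W × W) (δ δ' : W),
      Q (φ + pint (((0:V₁), δ, δ') : V₁ × W × W)) = Q φ) :=
  stmt_9_general V₁ W Ω Lint L₁ LSig hLSig LP LP1m hLP hLP1m hLPiso hLP1miso pint pext hpint hpext
    hsum hdisj pint' pext' hpint' hpext' hsum' hdisj' π hπ Q hQ
end

section
/- Let (L, ω) be a real symplectic vector space with a positive-definite compatible complex structure J, and let {·,·} denote the complex-bilinear extension to the complexification L^ℂ of the form {φ,η} := 2ω(φ, Jη) + 2iω(φ, η) on L. For ξ ∈ L^ℂ and τ, φ ∈ L define M(ξ; τ, φ) := exp((1/2){τ,φ} + (1/2){ξ,φ} − (1/2){τ,ξ} − (1/4){ξ,ξ}), the matrix element of the quantized Weyl slice observable determined by ξ between the coherent states labeled by τ and φ. Then for all φ, τ ∈ L and ξ ∈ L^ℂ: conj(M(ξ; φ, τ)) = M(−conj(ξ); τ, φ), where conj(ξ) denotes complex conjugation on L^ℂ. (This expresses that the quantization of the ∗-conjugate observable equals the adjoint of the quantized observable: hat(F^∗) = hat(F)^†.) -/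
/-!
Write `{x, y} = 2 ω(x, J y) + 2i ω(x, y)`. Compatibility of `J` with `ω` together with
`J² = -1` makes `ω(x, J y)` symmetric, while `ω(x, y)` is antisymmetric; since conjugation
flips the sign of `i`, it turns `{x, y}` into `{σ y, σ x}`. Conjugating the exponent of
`M(ξ; φ, τ)` term by term, with `φ, τ` real, therefore gives the exponent of `M(-σ ξ; τ, φ)`.
-/

open ComplexConjugate

namespace Symplectic

variable {R V : Type*} [CommRing R] [AddCommGroup V] [Module R V]

theorem apply_complexStructure_symm (ω : V →ₗ[R] V →ₗ[R] R) (J : V →ₗ[R] V)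
    (hanti : ∀ x y, ω x y = -ω y x) (hJJ : ∀ x, J (J x) = -x)
    (hJω : ∀ x y, ω (J x) (J y) = ω x y) (x y : V) :
    ω y (J x) = ω x (J y) := by
  rw [← hJω, hJJ, map_neg, hanti x]

end Symplectic

namespace Complexified

open Symplectic

variable {V : Type*} [AddCommGroup V] [Module ℂ V]

def brace (ω : V →ₗ[ℂ] V →ₗ[ℂ] ℂ) (J : V →ₗ[ℂ] V) : V →ₗ[ℂ] V →ₗ[ℂ] ℂ :=
  (2 : ℂ) • (ω.compl₂ J + Complex.I • ω)

theorem brace_apply (ω : V →ₗ[ℂ] V →ₗ[ℂ] ℂ) (J : V →ₗ[ℂ] V) (x y : V) :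
    brace ω J x y = 2 * ω x (J y) + 2 * Complex.I * ω x y := by
  simp only [brace, LinearMap.smul_apply, LinearMap.add_apply, LinearMap.compl₂_apply,
    smul_eq_mul]
  ring

theorem conj_brace (σ : V → V) (ω : V →ₗ[ℂ] V →ₗ[ℂ] ℂ) (J : V →ₗ[ℂ] V)
    (hanti : ∀ x y, ω x y = -ω y x) (hωσ : ∀ x y, ω (σ x) (σ y) = conj (ω x y))
    (hJσ : ∀ x, J (σ x) = σ (J x)) (hJJ : ∀ x, J (J x) = -x)
    (hJω : ∀ x y, ω (J x) (J y) = ω x y) (x y : V) :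
    conj (brace ω J x y) = brace ω J (σ y) (σ x) := by
  rw [brace_apply, brace_apply, hJσ, hωσ, hωσ,
    apply_complexStructure_symm ω J hanti hJJ hJω x y, hanti y x]
  simp only [map_add, map_mul, map_ofNat, Complex.conj_I, map_neg]
  ring

/-- `M(ξ; τ, φ)`, with `B` in the role of `{·,·}`. -/
noncomputable def matrixElement (B : V →ₗ[ℂ] V →ₗ[ℂ] ℂ) (ξ τ φ : V) : ℂ :=
  Complex.exp ((2 : ℂ)⁻¹ * B τ φ + (2 : ℂ)⁻¹ * B ξ φ - (2 : ℂ)⁻¹ * B τ ξ - (4 : ℂ)⁻¹ * B ξ ξ)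

theorem conj_matrixElement (σ : V → V) (B : V →ₗ[ℂ] V →ₗ[ℂ] ℂ)
    (hB : ∀ x y, conj (B x y) = B (σ y) (σ x)) {φ τ : V} (hφ : σ φ = φ) (hτ : σ τ = τ)
    (ξ : V) :
    conj (matrixElement B ξ φ τ) = matrixElement B (-σ ξ) τ φ := by
  rw [matrixElement, matrixElement, ← Complex.exp_conj]
  congr 1
  simp only [map_sub, map_add, map_mul, map_inv₀, map_ofNat, hB, hφ, hτ, map_neg,
    LinearMap.neg_apply]
  ring

end Complexified

open Complexified in
theorem stmt_13_general (V : Type*) [AddCommGroup V] [Module ℂ V]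
    -- complex conjugation on the complexification
    (σ : V → V)
    -- the complex-bilinear extension of the symplectic form
    (ω : V →ₗ[ℂ] V →ₗ[ℂ] ℂ)
    (hanti : ∀ x y : V, ω x y = - ω y x)
    (hωσ : ∀ x y : V, ω (σ x) (σ y) = starRingEnd ℂ (ω x y))
    -- the complex-linear extension of the positive-definite compatible complex structure J
    (J : V →ₗ[ℂ] V)
    (hJσ : ∀ x : V, J (σ x) = σ (J x))
    (hJJ : ∀ x : V, J (J x) = - x)
    (hJω : ∀ x y : V, ω (J x) (J y) = ω x y)
    -- the complex-bilinear extension of {φ,η} = 2ω(φ,Jη) + 2iω(φ,η)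
    (braces : V → V → ℂ)
    (hbraces : ∀ x y : V, braces x y = 2 * ω x (J y) + 2 * Complex.I * ω x y)
    -- the matrix element M(ξ; τ, φ)
    (M : V → V → V → ℂ)
    (hM : ∀ ξ τ φ : V, M ξ τ φ = Complex.exp
      ((2:ℂ)⁻¹ * braces τ φ + (2:ℂ)⁻¹ * braces ξ φ -
        (2:ℂ)⁻¹ * braces τ ξ - (4:ℂ)⁻¹ * braces ξ ξ)) :
    ∀ φ τ : V, σ φ = φ → σ τ = τ → ∀ ξ : V,
      starRingEnd ℂ (M ξ φ τ) = M (-(σ ξ)) τ φ := by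
  intro φ τ hφ hτ ξ
  have hbraces_eq : braces = fun x y => brace ω J x y := by
    funext x y
    rw [hbraces, brace_apply]
  have hM_eq : M = matrixElement (brace ω J) := by
    funext ξ τ φ
    rw [hM, hbraces_eq, matrixElement]
  rw [hM_eq]
  exact conj_matrixElement σ _ (conj_brace σ ω J hanti hωσ hJσ hJJ hJω) hφ hτ ξ

/-- conj(M(ξ; φ, τ)) = M(−conj(ξ); τ, φ) for the matrix elements
M(ξ; τ, φ) = exp((1/2){τ,φ} + (1/2){ξ,φ} − (1/2){τ,ξ} − (1/4){ξ,ξ}) of the quantized Weyl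
slice observable between coherent states, i.e. hat(F^∗) = hat(F)^†.  The complexification
L^ℂ of the real symplectic vector space (L, ω) is modelled as a complex vector space V with
complex conjugation σ; L is the fixed-point set of σ. -/
theorem stmt_13 (V : Type*) [AddCommGroup V] [Module ℂ V]
    -- complex conjugation on the complexification
    (σ : V → V)
    (hσadd : ∀ x y : V, σ (x + y) = σ x + σ y)
    (hσsmul : ∀ (c : ℂ) (x : V), σ (c • x) = (starRingEnd ℂ c) • σ x)
    (hσinvol : ∀ x : V, σ (σ x) = x)
    -- the complex-bilinear extension of the symplectic form
    (ω : V →ₗ[ℂ] V →ₗ[ℂ] ℂ)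
    (hanti : ∀ x y : V, ω x y = - ω y x)
    (hωσ : ∀ x y : V, ω (σ x) (σ y) = starRingEnd ℂ (ω x y))
    (hnondeg : ∀ x : V, σ x = x → (∀ y : V, σ y = y → ω x y = 0) → x = 0)
    -- the complex-linear extension of the positive-definite compatible complex structure J
    (J : V →ₗ[ℂ] V)
    (hJσ : ∀ x : V, J (σ x) = σ (J x))
    (hJJ : ∀ x : V, J (J x) = - x)
    (hJω : ∀ x y : V, ω (J x) (J y) = ω x y)
    (hJpos : ∀ x : V, σ x = x → x ≠ 0 → 0 < (2 * ω x (J x)).re)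
    -- the complex-bilinear extension of {φ,η} = 2ω(φ,Jη) + 2iω(φ,η)
    (braces : V → V → ℂ)
    (hbraces : ∀ x y : V, braces x y = 2 * ω x (J y) + 2 * Complex.I * ω x y)
    -- the matrix element M(ξ; τ, φ)
    (M : V → V → V → ℂ)
    (hM : ∀ ξ τ φ : V, M ξ τ φ = Complex.exp
      ((2:ℂ)⁻¹ * braces τ φ + (2:ℂ)⁻¹ * braces ξ φ -
        (2:ℂ)⁻¹ * braces τ ξ - (4:ℂ)⁻¹ * braces ξ ξ)) :
    ∀ φ τ : V, σ φ = φ → σ τ = τ → ∀ ξ : V,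
      starRingEnd ℂ (M ξ φ τ) = M (-(σ ξ)) τ φ :=
  stmt_13_general V σ ω hanti hωσ J hJσ hJJ hJω braces hbraces M hM
end

section
/- Let (L, ω) be a real symplectic vector space with a positive-definite compatible complex structure J; extend J and ω to the complexification L^ℂ, let P⁻(x) := (1/2)(x + iJx), and let {·,·} denote the complex-bilinear extension to L^ℂ of {φ,η} := 2ω(φ, Jη) + 2iω(φ, η). For ξ ∈ L^ℂ set ν := P⁻(ξ) + conj(P⁻(ξ)). Then: (i) ν ∈ L (i.e. ν is fixed by complex conjugation); (ii) {ξ, φ} = {ν, φ} for all φ ∈ L^ℂ; (iii) (1/4){ν,ν} − (1/4){ξ,ξ} = i·ω(ξ, ν). Consequently exp(−(1/4){ξ,ξ})·K_ν = exp(iω(ξ,ν))·k_ν, where K_ν is the coherent state with wave function K_ν(φ) = exp((1/2){ν,φ}) and k_ν := exp(−(1/4){ν,ν})·K_ν is its normalized version: the quantized Weyl slice observable determined by ξ maps the vacuum K₀ to exp(iω(ξ,ν))·k_ν. -/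
/-!
`J` acts as `i` on the range of `P⁺ = (1 − iJ)/2`, and `σ ∘ P⁻ = P⁺ ∘ σ`. Since
`{iJx, y} = {x, y}`, the pairing vanishes on the range of `P⁺` in its first slot, so
`{P⁻ξ + P⁺η, ·} = {ξ, ·}` for every `η`; with `η = σξ` this is (ii), and (i) holds because `σ`
swaps the two summands of `ν`. For (iii), `ν − ξ = P⁺(η − ξ)` is an `i`-eigenvector of `J`, on
which `{ξ, ·} = 4iω(ξ, ·)`, so `{ν, ν} = {ξ, ν} = {ξ, ξ} + 4iω(ξ, ν)`.
-/

open Complex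

noncomputable section

namespace ComplexStructure

variable {V : Type*} [AddCommGroup V] [Module ℂ V]

def projMinus (J : V →ₗ[ℂ] V) : V →ₗ[ℂ] V := (2 : ℂ)⁻¹ • (LinearMap.id + I • J)

def projPlus (J : V →ₗ[ℂ] V) : V →ₗ[ℂ] V := (2 : ℂ)⁻¹ • (LinearMap.id - I • J)

def bracePairing (ω : V →ₗ[ℂ] V →ₗ[ℂ] ℂ) (J : V →ₗ[ℂ] V) : V →ₗ[ℂ] V →ₗ[ℂ] ℂ :=
  (2 : ℂ) • ω.compl₂ J + (2 * I) • ω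

section

variable (J : V →ₗ[ℂ] V)

theorem projMinus_apply (x : V) : projMinus J x = (2 : ℂ)⁻¹ • (x + I • J x) := rfl

theorem projPlus_apply (x : V) : projPlus J x = (2 : ℂ)⁻¹ • (x - I • J x) := rfl

theorem projMinus_add_projPlus (x : V) : projMinus J x + projPlus J x = x := by
  rw [projMinus_apply, projPlus_apply, ← smul_add, add_add_sub_cancel, ← two_smul ℂ, smul_smul,
    inv_mul_cancel₀ two_ne_zero, one_smul]

theorem apply_projPlus (hJJ : ∀ x, J (J x) = -x) (x : V) :
    J (projPlus J x) = I • projPlus J x := by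
  rw [projPlus_apply, map_smul, map_sub, map_smul, hJJ]
  linear_combination (norm := module) I_mul_I • ((2 : ℂ)⁻¹ • J x)

theorem conj_projMinus (σ : V →ₗ⋆[ℂ] V) (hJσ : ∀ x, J (σ x) = σ (J x)) (x : V) :
    σ (projMinus J x) = projPlus J (σ x) := by
  simp only [projMinus_apply, projPlus_apply, LinearMap.map_smulₛₗ, map_add, hJσ, map_inv₀,
    map_ofNat, conj_I, neg_smul, ← sub_eq_add_neg]

end

section

variable (ω : V →ₗ[ℂ] V →ₗ[ℂ] ℂ) (J : V →ₗ[ℂ] V)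

theorem bracePairing_apply (x y : V) :
    bracePairing ω J x y = 2 * ω x (J y) + 2 * I * ω x y := rfl

theorem apply_J_left (hJJ : ∀ x, J (J x) = -x) (hJω : ∀ x y, ω (J x) (J y) = ω x y) (x y : V) :
    ω (J x) y = -ω x (J y) := by
  rw [← hJω, hJJ, map_neg, LinearMap.neg_apply]

theorem bracePairing_projPlus_left (hJJ : ∀ x, J (J x) = -x)
    (hJω : ∀ x y, ω (J x) (J y) = ω x y) (x y : V) :
    bracePairing ω J (projPlus J x) y = 0 := by
  simp only [bracePairing_apply, projPlus_apply, map_smul, map_sub, LinearMap.smul_apply,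
    LinearMap.sub_apply, smul_eq_mul, hJω, apply_J_left ω J hJJ hJω]
  linear_combination ω x (J y) * I_mul_I

theorem bracePairing_projMinus_left (hJJ : ∀ x, J (J x) = -x)
    (hJω : ∀ x y, ω (J x) (J y) = ω x y) (x y : V) :
    bracePairing ω J (projMinus J x) y = bracePairing ω J x y := by
  conv_rhs => rw [← projMinus_add_projPlus J x]
  rw [map_add, LinearMap.add_apply, bracePairing_projPlus_left ω J hJJ hJω, add_zero]

theorem bracePairing_of_apply_eq_I_smul (x : V) {z : V} (hz : J z = I • z) :
    bracePairing ω J x z = 4 * I * ω x z := by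
  rw [bracePairing_apply, hz, map_smul, smul_eq_mul]
  ring

theorem bracePairing_projMinus_add_projPlus_left (hJJ : ∀ x, J (J x) = -x)
    (hJω : ∀ x y, ω (J x) (J y) = ω x y) (ξ η y : V) :
    bracePairing ω J (projMinus J ξ + projPlus J η) y = bracePairing ω J ξ y := by
  rw [map_add, LinearMap.add_apply, bracePairing_projMinus_left ω J hJJ hJω,
    bracePairing_projPlus_left ω J hJJ hJω, add_zero]

theorem quarter_bracePairing_sub (hanti : ∀ x y, ω x y = -ω y x) (hJJ : ∀ x, J (J x) = -x)
    (hJω : ∀ x y, ω (J x) (J y) = ω x y) (ξ η : V) :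
    let ν := projMinus J ξ + projPlus J η
    (4 : ℂ)⁻¹ * bracePairing ω J ν ν - (4 : ℂ)⁻¹ * bracePairing ω J ξ ξ = I * ω ξ ν := by
  intro ν
  have hνξ : ν - ξ = projPlus J (η - ξ) := by
    conv_lhs => rw [← projMinus_add_projPlus J ξ]
    simp only [ν, map_sub]
    abel
  have hself : ω ξ ξ = 0 := by linear_combination (hanti ξ ξ) / 2
  have hJ : J (ν - ξ) = I • (ν - ξ) := by
    rw [hνξ]
    exact apply_projPlus J hJJ _
  have hsplit : bracePairing ω J ν ν = bracePairing ω J ξ ξ + 4 * I * ω ξ ν :=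
    calc bracePairing ω J ν ν = bracePairing ω J ξ ν :=
          bracePairing_projMinus_add_projPlus_left ω J hJJ hJω ξ η ν
      _ = bracePairing ω J ξ ξ + bracePairing ω J ξ (ν - ξ) := by rw [← map_add, add_sub_cancel]
      _ = bracePairing ω J ξ ξ + 4 * I * ω ξ ν := by
          rw [bracePairing_of_apply_eq_I_smul ω J ξ hJ, map_sub, hself, sub_zero]
  rw [hsplit]
  ring

end

end ComplexStructure

end

open ComplexStructure

theorem stmt_14_general (V : Type*) [AddCommGroup V] [Module ℂ V]
    -- complex conjugation on the complexification
    (σ : V → V)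
    (hσadd : ∀ x y : V, σ (x + y) = σ x + σ y)
    (hσsmul : ∀ (c : ℂ) (x : V), σ (c • x) = (starRingEnd ℂ c) • σ x)
    (hσinvol : ∀ x : V, σ (σ x) = x)
    -- the complex-bilinear extension of the symplectic form
    (ω : V →ₗ[ℂ] V →ₗ[ℂ] ℂ)
    (hanti : ∀ x y : V, ω x y = - ω y x)
    -- the complex-linear extension of the positive-definite compatible complex structure J
    (J : V →ₗ[ℂ] V)
    (hJσ : ∀ x : V, J (σ x) = σ (J x))
    (hJJ : ∀ x : V, J (J x) = - x)
    (hJω : ∀ x y : V, ω (J x) (J y) = ω x y)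
    -- the projection P⁻(x) = (1/2)(x + iJx)
    (Pm : V → V)
    (hPm : ∀ x : V, Pm x = (2:ℂ)⁻¹ • (x + Complex.I • J x))
    -- the complex-bilinear extension of {φ,η} = 2ω(φ,Jη) + 2iω(φ,η)
    (braces : V → V → ℂ)
    (hbraces : ∀ x y : V, braces x y = 2 * ω x (J y) + 2 * Complex.I * ω x y)
    -- ν := P⁻(ξ) + conj(P⁻(ξ))
    (ξ ν : V) (hν : ν = Pm ξ + σ (Pm ξ)) :
    -- (i) ν is fixed by complex conjugation, i.e. ν ∈ L
    σ ν = ν ∧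
    -- (ii) {ξ, φ} = {ν, φ} for all φ ∈ L^ℂ
    (∀ φ : V, braces ξ φ = braces ν φ) ∧
    -- (iii) (1/4){ν,ν} − (1/4){ξ,ξ} = i·ω(ξ, ν)
    (4:ℂ)⁻¹ * braces ν ν - (4:ℂ)⁻¹ * braces ξ ξ = Complex.I * ω ξ ν ∧
    -- consequently: exp(−(1/4){ξ,ξ})·K_ν = exp(iω(ξ,ν))·k_ν as wave functions on L
    (∀ φ : V, σ φ = φ →
      Complex.exp (-(4:ℂ)⁻¹ * braces ξ ξ) * Complex.exp ((2:ℂ)⁻¹ * braces ν φ) =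
        Complex.exp (Complex.I * ω ξ ν) *
          (Complex.exp (-(4:ℂ)⁻¹ * braces ν ν) *
            Complex.exp ((2:ℂ)⁻¹ * braces ν φ))) := by
  have hconj : σ ν = ν := by rw [hν, hσadd, hσinvol, add_comm]
  let σL : V →ₗ⋆[ℂ] V := ⟨⟨σ, hσadd⟩, hσsmul⟩
  obtain rfl : Pm = projMinus J := funext hPm
  obtain rfl : braces = fun x y => bracePairing ω J x y := funext₂ hbraces
  obtain rfl : ν = projMinus J ξ + projPlus J (σ ξ) :=
    hν.trans (congrArg _ (conj_projMinus J σL hJσ ξ))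
  have hquarter := quarter_bracePairing_sub ω J hanti hJJ hJω ξ (σ ξ)
  refine ⟨hconj, fun φ => (bracePairing_projMinus_add_projPlus_left ω J hJJ hJω ξ (σ ξ) φ).symm,
    hquarter, fun φ _ => ?_⟩
  rw [← Complex.exp_add, ← Complex.exp_add, ← Complex.exp_add]
  congr 1
  linear_combination hquarter

/-- With ν := P⁻(ξ) + conj(P⁻(ξ)): (i) ν is real; (ii) {ξ,φ} = {ν,φ} for all
φ ∈ L^ℂ; (iii) (1/4){ν,ν} − (1/4){ξ,ξ} = iω(ξ,ν); consequently the quantized Weyl slice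
observable determined by ξ maps the vacuum K₀ to exp(iω(ξ,ν))·k_ν.  The complexification
L^ℂ is modelled as a complex vector space V with complex conjugation σ. -/
theorem stmt_14 (V : Type*) [AddCommGroup V] [Module ℂ V]
    -- complex conjugation on the complexification
    (σ : V → V)
    (hσadd : ∀ x y : V, σ (x + y) = σ x + σ y)
    (hσsmul : ∀ (c : ℂ) (x : V), σ (c • x) = (starRingEnd ℂ c) • σ x)
    (hσinvol : ∀ x : V, σ (σ x) = x)
    -- the complex-bilinear extension of the symplectic form
    (ω : V →ₗ[ℂ] V →ₗ[ℂ] ℂ)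
    (hanti : ∀ x y : V, ω x y = - ω y x)
    (hωσ : ∀ x y : V, ω (σ x) (σ y) = starRingEnd ℂ (ω x y))
    (hnondeg : ∀ x : V, σ x = x → (∀ y : V, σ y = y → ω x y = 0) → x = 0)
    -- the complex-linear extension of the positive-definite compatible complex structure J
    (J : V →ₗ[ℂ] V)
    (hJσ : ∀ x : V, J (σ x) = σ (J x))
    (hJJ : ∀ x : V, J (J x) = - x)
    (hJω : ∀ x y : V, ω (J x) (J y) = ω x y)
    (hJpos : ∀ x : V, σ x = x → x ≠ 0 → 0 < (2 * ω x (J x)).re)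
    -- the projection P⁻(x) = (1/2)(x + iJx)
    (Pm : V → V)
    (hPm : ∀ x : V, Pm x = (2:ℂ)⁻¹ • (x + Complex.I • J x))
    -- the complex-bilinear extension of {φ,η} = 2ω(φ,Jη) + 2iω(φ,η)
    (braces : V → V → ℂ)
    (hbraces : ∀ x y : V, braces x y = 2 * ω x (J y) + 2 * Complex.I * ω x y)
    -- ν := P⁻(ξ) + conj(P⁻(ξ))
    (ξ ν : V) (hν : ν = Pm ξ + σ (Pm ξ)) :
    -- (i) ν is fixed by complex conjugation, i.e. ν ∈ L
    σ ν = ν ∧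
    -- (ii) {ξ, φ} = {ν, φ} for all φ ∈ L^ℂ
    (∀ φ : V, braces ξ φ = braces ν φ) ∧
    -- (iii) (1/4){ν,ν} − (1/4){ξ,ξ} = i·ω(ξ, ν)
    (4:ℂ)⁻¹ * braces ν ν - (4:ℂ)⁻¹ * braces ξ ξ = Complex.I * ω ξ ν ∧
    -- consequently: exp(−(1/4){ξ,ξ})·K_ν = exp(iω(ξ,ν))·k_ν as wave functions on L
    (∀ φ : V, σ φ = φ →
      Complex.exp (-(4:ℂ)⁻¹ * braces ξ ξ) * Complex.exp ((2:ℂ)⁻¹ * braces ν φ) =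
        Complex.exp (Complex.I * ω ξ ν) *
          (Complex.exp (-(4:ℂ)⁻¹ * braces ν ν) *
            Complex.exp ((2:ℂ)⁻¹ * braces ν φ))) :=
  stmt_14_general V σ hσadd hσsmul hσinvol ω hanti J hJσ hJJ hJω Pm hPm braces hbraces ξ ν hν
end

section
/- Let (V, ω) be a complex symplectic vector space with three Lagrangian subspaces V^P, V^P′, V^P̄ such that V = V^P ⊕ V^P̄ and V = V^P′ ⊕ V^P̄. For ξ ∈ V write ξ = ξ⁺ + ξ⁻ with ξ⁺ ∈ V^P, ξ⁻ ∈ V^P̄ (first decomposition) and ξ = ξ^X + ξ^M with ξ^X ∈ V^P′, ξ^M ∈ V^P̄ (second decomposition). Let J : V → V be the complex-linear map equal to i·id on V^P and −i·id on V^P̄. Then the function Y : V → ℂ, Y(ξ) := exp(i·ω(ξ^X, ξ⁺)), is holomorphic with respect to J: for all a, b ∈ V, the map ℂ → ℂ sending z to Y(a + (Re z)·b + (Im z)·J(b)) is entire. (This is the holomorphicity of the wave function of the pseudo-state representing the vacuum of the polarization P′ in the quantization built on the polarization P.) -/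
/-! Both `ξ ↦ ξ⁺` and `ξ ↦ ξ^X` are complex-linear maps vanishing on `V^P̄`, and any such map `f`
satisfies `f (J b) = i f b`. Along the line `z ↦ a + (Re z) b + (Im z) J b` it is therefore the
affine function `z ↦ f a + z f b`, so `Y` restricted to the line is `exp` of a quadratic polynomial
in `z`. -/

theorem Submodule.apply_eq_zero_of_mem_of_add_eq_self {R M : Type*} [Ring R] [AddCommGroup M]
    [Module R M] {A B : Submodule R M} {p q : M → M} (hp : ∀ x, p x ∈ A) (hq : ∀ x, q x ∈ B)
    (hpq : ∀ x, p x + q x = x) (hAB : Disjoint A B) {v : M} (hv : v ∈ B) : p v = 0 := by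
  have hpB : p v ∈ B := by
    rw [eq_sub_of_add_eq (hpq v)]
    exact B.sub_mem hv (hq v)
  exact Submodule.disjoint_def.mp hAB _ (hp v) hpB

theorem LinearMap.map_add_re_smul_add_im_smul {M N : Type*} [AddCommGroup M] [Module ℂ M]
    [AddCommGroup N] [Module ℂ N] (f : M →ₗ[ℂ] N) {a b c : M} (hc : f c = Complex.I • f b)
    (z : ℂ) : f (a + (z.re : ℂ) • b + (z.im : ℂ) • c) = f a + z • f b := by
  rw [map_add, map_add, map_smul, map_smul, hc, smul_smul, add_assoc, ← add_smul,
    Complex.re_add_im]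

theorem LinearMap.map_I_smul_sub_I_smul_eq {M N : Type*} [AddCommGroup M] [Module ℂ M]
    [AddCommGroup N] [Module ℂ N] (f : M →ₗ[ℂ] N) {b₁ b₂ : M} (h₂ : f b₂ = 0) :
    f (Complex.I • b₁ - Complex.I • b₂) = Complex.I • f (b₁ + b₂) := by
  rw [map_sub, map_smul, map_smul, map_add, h₂, smul_zero, sub_zero, add_zero]

theorem stmt_15_general (V : Type*) [AddCommGroup V] [Module ℂ V]
    (ω : V →ₗ[ℂ] V →ₗ[ℂ] ℂ)
    -- three Lagrangian subspaces V^P, V^P′, V^P̄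
    (VP VP' VPb : Submodule ℂ V)
    -- V = V^P ⊕ V^P̄ with projections ξ ↦ ξ⁺, ξ ↦ ξ⁻
    (pp pm : V →ₗ[ℂ] V)
    (hpp : ∀ x : V, pp x ∈ VP) (hpm : ∀ x : V, pm x ∈ VPb)
    (hppm : ∀ x : V, pp x + pm x = x)
    (hdisjP : VP ⊓ VPb = ⊥)
    -- V = V^P′ ⊕ V^P̄ with projections ξ ↦ ξ^X, ξ ↦ ξ^M
    (pX pM : V →ₗ[ℂ] V)
    (hpX : ∀ x : V, pX x ∈ VP') (hpM : ∀ x : V, pM x ∈ VPb)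
    (hpXM : ∀ x : V, pX x + pM x = x)
    (hdisjP' : VP' ⊓ VPb = ⊥)
    -- J = i·id on V^P, −i·id on V^P̄
    (J : V → V)
    (hJ : ∀ x : V, J x = Complex.I • pp x - Complex.I • pm x)
    -- the wave function Y(ξ) = exp(iω(ξ^X, ξ⁺))
    (Y : V → ℂ)
    (hY : ∀ ξ : V, Y ξ = Complex.exp (Complex.I * ω (pX ξ) (pp ξ))) :
    -- Y is holomorphic with respect to J
    ∀ a b : V, Differentiable ℂ fun z : ℂ =>
      Y (a + (z.re : ℂ) • b + (z.im : ℂ) • J b) := by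
  intro a b
  have hline : ∀ f : V →ₗ[ℂ] V, f (pm b) = 0 →
      ∀ z : ℂ, f (a + (z.re : ℂ) • b + (z.im : ℂ) • J b) = f a + z • f b := fun f hf =>
    f.map_add_re_smul_add_im_smul (by rw [hJ, f.map_I_smul_sub_I_smul_eq hf, hppm])
  have hpp_pm : pp (pm b) = 0 := Submodule.apply_eq_zero_of_mem_of_add_eq_self hpp hpm hppm
    (disjoint_iff.mpr hdisjP) (hpm b)
  have hpX_pm : pX (pm b) = 0 := Submodule.apply_eq_zero_of_mem_of_add_eq_self hpX hpM hpXM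
    (disjoint_iff.mpr hdisjP') (hpm b)
  simp only [hY, hline pp hpp_pm, hline pX hpX_pm, map_add, map_smul, LinearMap.add_apply,
    LinearMap.smul_apply, smul_eq_mul]
  fun_prop

/-- Holomorphicity (with respect to the complex structure J associated to
V = V^P ⊕ V^P̄) of the wave function Y(ξ) = exp(iω(ξ^X, ξ⁺)) of the pseudo-state encoding
the change of vacuum from the polarization P to the polarization P′. -/
theorem stmt_15 (V : Type*) [AddCommGroup V] [Module ℂ V]
    (ω : V →ₗ[ℂ] V →ₗ[ℂ] ℂ)
    (hanti : ∀ x y : V, ω x y = - ω y x)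
    (hnondeg : ∀ x : V, (∀ y : V, ω x y = 0) → x = 0)
    -- three Lagrangian subspaces V^P, V^P′, V^P̄
    (VP VP' VPb : Submodule ℂ V)
    (hPiso : ∀ x ∈ VP, ∀ y ∈ VP, ω x y = 0)
    (hPcoiso : ∀ y : V, (∀ x ∈ VP, ω x y = 0) → y ∈ VP)
    (hP'iso : ∀ x ∈ VP', ∀ y ∈ VP', ω x y = 0)
    (hP'coiso : ∀ y : V, (∀ x ∈ VP', ω x y = 0) → y ∈ VP')
    (hPbiso : ∀ x ∈ VPb, ∀ y ∈ VPb, ω x y = 0)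
    (hPbcoiso : ∀ y : V, (∀ x ∈ VPb, ω x y = 0) → y ∈ VPb)
    -- V = V^P ⊕ V^P̄ with projections ξ ↦ ξ⁺, ξ ↦ ξ⁻
    (pp pm : V →ₗ[ℂ] V)
    (hpp : ∀ x : V, pp x ∈ VP) (hpm : ∀ x : V, pm x ∈ VPb)
    (hppm : ∀ x : V, pp x + pm x = x)
    (hdisjP : VP ⊓ VPb = ⊥)
    -- V = V^P′ ⊕ V^P̄ with projections ξ ↦ ξ^X, ξ ↦ ξ^M
    (pX pM : V →ₗ[ℂ] V)
    (hpX : ∀ x : V, pX x ∈ VP') (hpM : ∀ x : V, pM x ∈ VPb)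
    (hpXM : ∀ x : V, pX x + pM x = x)
    (hdisjP' : VP' ⊓ VPb = ⊥)
    -- J = i·id on V^P, −i·id on V^P̄
    (J : V → V)
    (hJ : ∀ x : V, J x = Complex.I • pp x - Complex.I • pm x)
    -- the wave function Y(ξ) = exp(iω(ξ^X, ξ⁺))
    (Y : V → ℂ)
    (hY : ∀ ξ : V, Y ξ = Complex.exp (Complex.I * ω (pX ξ) (pp ξ))) :
    -- Y is holomorphic with respect to J
    ∀ a b : V, Differentiable ℂ fun z : ℂ =>
      Y (a + (z.re : ℂ) • b + (z.im : ℂ) • J b) :=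
  stmt_15_general V ω VP VP' VPb pp pm hpp hpm hppm hdisjP pX pM hpX hpM hpXM hdisjP' J hJ Y hY
end

section
/- Let (L, ω) be a real symplectic vector space and γ : L → L an ℝ-linear map with γ∘γ = id and ω(γ(φ), γ(η)) = −ω(φ, η); extend γ complex-linearly and ω complex-bilinearly to the complexification L^ℂ, and let α(x) := −i·conj(γ(x)) be the induced compatible real structure with fixed-point set L^α. Define I : L → L^ℂ by I(φ) := √2 · (1/2)(φ + α(φ)), which for φ ∈ L equals (1/√2)(φ − iγ(φ)) and takes values in L^α. Then ω(I(φ), I(η)) = ω(φ, η) for all φ, η ∈ L: the symplectic form pulled back along the identification I of L with L^α coincides with the original symplectic form. -/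
/-! The vectors `φ - iγφ` with `φ` real are fixed by `α`, because `γ` commutes with the conjugation
and is an involution. On them the form doubles: in `ω(φ - iγφ, η - iγη)` the term `i²ω(γφ, γη)`
equals `ω(φ, η)` since `γ` is anti-symplectic, while the two cross terms cancel because
`ω(γφ, η) = ω(γφ, γ(γη)) = -ω(φ, γη)`. The normalisation `1/√2` removes the factor `2`. -/

open Complex

theorem Complex.ofReal_sqrt_two_sq : (√2 : ℂ) ^ 2 = 2 := by
  norm_cast
  exact Real.sq_sqrt zero_le_two

theorem Complex.ofReal_sqrt_two_mul_inv_two : (√2 : ℂ) * 2⁻¹ = (√2 : ℂ)⁻¹ := by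
  have hs : (√2 : ℂ) ≠ 0 := by simp
  field_simp
  exact ofReal_sqrt_two_sq

section

variable {V : Type*} [AddCommGroup V] [Module ℂ V]

theorem apply_sub_I_smul_apply_sub_I_smul (ω : V →ₗ[ℂ] V →ₗ[ℂ] ℂ) (γ : V →ₗ[ℂ] V)
    (hγγ : ∀ x, γ (γ x) = x) (hγω : ∀ x y, ω (γ x) (γ y) = -ω x y) (x y : V) :
    ω (x - I • γ x) (y - I • γ y) = 2 * ω x y := by
  have hcross : ω (γ x) y = -ω x (γ y) := by rw [← hγγ y, hγω, hγγ]
  simp only [map_sub, map_smul, LinearMap.sub_apply, LinearMap.smul_apply, smul_eq_mul, hγω,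
    hcross]
  linear_combination (-ω x y) * I_sq

theorem neg_I_smul_conj_apply_ofReal_smul_sub_I_smul (σ : V →ₗ⋆[ℂ] V) (γ : V →ₗ[ℂ] V)
    (hγσ : ∀ x, γ (σ x) = σ (γ x)) (hγγ : ∀ x, γ (γ x) = x) {x : V} (hx : σ x = x) (r : ℝ) :
    -(I • σ (γ ((r : ℂ) • (x - I • γ x)))) = (r : ℂ) • (x - I • γ x) := by
  have hγx : σ (γ x) = γ x := by rw [← hγσ, hx]
  simp only [map_smul, map_sub, LinearMap.map_smulₛₗ, hγγ, hγx, hx, conj_ofReal, conj_I]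
  match_scalars
  · ring
  · linear_combination -(r : ℂ) * I_sq

end

theorem stmt_18_general (V : Type*) [AddCommGroup V] [Module ℂ V]
    -- complex conjugation on the complexification
    (σ : V → V)
    (hσadd : ∀ x y : V, σ (x + y) = σ x + σ y)
    (hσsmul : ∀ (c : ℂ) (x : V), σ (c • x) = (starRingEnd ℂ c) • σ x)
    -- the complex-bilinear extension of the symplectic form
    (ω : V →ₗ[ℂ] V →ₗ[ℂ] ℂ)
    -- the complex-linear extension of the reflection map γ
    (γ : V →ₗ[ℂ] V)
    (hγσ : ∀ x : V, γ (σ x) = σ (γ x))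
    (hγγ : ∀ x : V, γ (γ x) = x)
    (hγω : ∀ x y : V, ω (γ x) (γ y) = - ω x y)
    -- the induced compatible real structure α(x) = −i·conj(γ(x))
    (α : V → V)
    (hα : ∀ x : V, α x = -(Complex.I • σ (γ x)))
    -- the identification I(φ) = √2·(1/2)(φ + α(φ))
    (Iop : V → V)
    (hIop : ∀ x : V, Iop x = (Real.sqrt 2 : ℂ) • ((2:ℂ)⁻¹ • (x + α x))) :
    -- on L, I(φ) = (1/√2)(φ − iγ(φ))
    (∀ φ : V, σ φ = φ → Iop φ = ((Real.sqrt 2 : ℂ))⁻¹ • (φ - Complex.I • γ φ)) ∧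
    -- I takes values in L^α
    (∀ φ : V, σ φ = φ → α (Iop φ) = Iop φ) ∧
    -- the pulled-back symplectic form coincides with the original one
    (∀ φ η : V, σ φ = φ → σ η = η → ω (Iop φ) (Iop η) = ω φ η) := by
  let σₗ : V →ₗ⋆[ℂ] V := { toFun := σ, map_add' := hσadd, map_smul' := hσsmul }
  have hIop_real : ∀ φ, σ φ = φ → Iop φ = (√2 : ℂ)⁻¹ • (φ - I • γ φ) := by
    intro φ hφ
    rw [hIop, hα, ← hγσ, hφ, ← sub_eq_add_neg, smul_smul, ofReal_sqrt_two_mul_inv_two]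
  refine ⟨hIop_real, fun φ hφ => ?_, fun φ η hφ hη => ?_⟩
  · rw [hIop_real φ hφ, hα, ← ofReal_inv]
    exact neg_I_smul_conj_apply_ofReal_smul_sub_I_smul σₗ γ hγσ hγγ hφ _
  · rw [hIop_real φ hφ, hIop_real η hη, map_smul, map_smul, LinearMap.smul_apply, smul_eq_mul,
      smul_eq_mul, apply_sub_I_smul_apply_sub_I_smul ω γ hγγ hγω, ← mul_assoc, ← sq, inv_pow,
      ofReal_sqrt_two_sq, inv_mul_cancel_left₀ two_ne_zero]

/-- For a reflection map γ on a real symplectic vector space (L, ω) with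
induced compatible real structure α(x) = −i·conj(γ(x)) on L^ℂ, the identification
I(φ) := √2·(1/2)(φ + α(φ)) of L with L^α equals (1/√2)(φ − iγ(φ)) on L, takes values in
L^α, and pulls the symplectic form back to itself: ω(I(φ), I(η)) = ω(φ, η) for φ, η ∈ L.
The complexification L^ℂ is modelled as a complex vector space V with complex conjugation σ;
L is the fixed-point set of σ. -/
theorem stmt_18 (V : Type*) [AddCommGroup V] [Module ℂ V]
    -- complex conjugation on the complexification
    (σ : V → V)
    (hσadd : ∀ x y : V, σ (x + y) = σ x + σ y)
    (hσsmul : ∀ (c : ℂ) (x : V), σ (c • x) = (starRingEnd ℂ c) • σ x)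
    (hσinvol : ∀ x : V, σ (σ x) = x)
    -- the complex-bilinear extension of the symplectic form
    (ω : V →ₗ[ℂ] V →ₗ[ℂ] ℂ)
    (hanti : ∀ x y : V, ω x y = - ω y x)
    (hωσ : ∀ x y : V, ω (σ x) (σ y) = starRingEnd ℂ (ω x y))
    (hnondeg : ∀ x : V, σ x = x → (∀ y : V, σ y = y → ω x y = 0) → x = 0)
    -- the complex-linear extension of the reflection map γ
    (γ : V →ₗ[ℂ] V)
    (hγσ : ∀ x : V, γ (σ x) = σ (γ x))
    (hγγ : ∀ x : V, γ (γ x) = x)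
    (hγω : ∀ x y : V, ω (γ x) (γ y) = - ω x y)
    -- the induced compatible real structure α(x) = −i·conj(γ(x))
    (α : V → V)
    (hα : ∀ x : V, α x = -(Complex.I • σ (γ x)))
    -- the identification I(φ) = √2·(1/2)(φ + α(φ))
    (Iop : V → V)
    (hIop : ∀ x : V, Iop x = (Real.sqrt 2 : ℂ) • ((2:ℂ)⁻¹ • (x + α x))) :
    -- on L, I(φ) = (1/√2)(φ − iγ(φ))
    (∀ φ : V, σ φ = φ → Iop φ = ((Real.sqrt 2 : ℂ))⁻¹ • (φ - Complex.I • γ φ)) ∧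
    -- I takes values in L^α
    (∀ φ : V, σ φ = φ → α (Iop φ) = Iop φ) ∧
    -- the pulled-back symplectic form coincides with the original one
    (∀ φ η : V, σ φ = φ → σ η = η → ω (Iop φ) (Iop η) = ω φ η) :=
  stmt_18_general V σ hσadd hσsmul ω γ hγσ hγγ hγω α hα Iop hIop
end
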